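/- arXiv:1909.12757 — 6 statements merged into one kernel-verified Lean document; each statement's English description precedes it below -/
import Mathlib

section
/- Let F ⊣ U : A → X and L ⊣ R : C → X be adjunctions with U and R fully faithful. If the unit ν of L ⊣ R is such that ν_{UA} : UA → RL(UA) is an isomorphism for every object A of A, then U factors through R up to natural isomorphism; i.e., there is a functor K : A → C with R ∘ K ≅ U. -/
open CategoryTheory

theorem stmt0 {X A C : Type*} [Category X] [Category A] [Category C]
    (F : X ⥤ A) (U : A ⥤ X) (_adjFU : F ⊣ U) [U.Full] [U.Faithful]
    (L : X ⥤ C) (R : C ⥤ X) (adjLR : L ⊣ R) [R.Full] [R.Faithful]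
    (h : ∀ a : A, IsIso (adjLR.unit.app (U.obj a))) :
    ∃ K : A ⥤ C, Nonempty (K ⋙ R ≅ U) := by
  refine ⟨U ⋙ L, ⟨NatIso.ofComponents (fun a => (asIso (adjLR.unit.app (U.obj a))).symm) ?_⟩⟩
  intro a b f
  have := adjLR.unit.naturality (U.map f)
  simp only [Iso.symm_hom, asIso_inv]
  rw [IsIso.comp_inv_eq, Category.assoc, IsIso.eq_inv_comp]
  simp [this]
end

section
/- Let F ⊣ U : A → X and L ⊣ R : C → X be adjunctions with U and R fully faithful, and suppose F ν : F → F R L is invertible, where ν is the unit of L ⊣ R. Then the functor H = F R : C → A is left adjoint to K = L U : A → C, and the counit of H ⊣ K is invertible (so K is fully faithful). -/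
/-!
Since `F ν` is invertible, every object `U a` sees the unit `ν` as a bijection on hom-sets, so
`ν_{U a}` is split mono; a split mono unit of a reflection is invertible. Thus `U ≅ U ⋙ L ⋙ R`,
and the adjunction `F ⊣ U` restricts along the fully faithful `R` to `R ⋙ F ⊣ U ⋙ L`, whose right
adjoint is fully faithful because `R` and `U` are.
-/

open CategoryTheory

namespace CategoryTheory.Adjunction

variable {X A : Type*} [Category X] [Category A]

lemma isSplitMono_of_isIso_map {F : X ⥤ A} {U : A ⥤ X} (adj : F ⊣ U) {a : A} {y : X}
    (f : U.obj a ⟶ y) [IsIso (F.map f)] : IsSplitMono f :=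
  IsSplitMono.mk' ⟨adj.homEquiv _ _ (inv (F.map f) ≫ adj.counit.app a), by
    rw [← adj.homEquiv_naturality_left, IsIso.hom_inv_id_assoc, homEquiv_unit,
      right_triangle_components]⟩

lemma isIso_unit_app_of_isSplitMono {L : X ⥤ A} {R : A ⥤ X} (adj : L ⊣ R) [R.Full] [R.Faithful]
    (x : X) [IsSplitMono (adj.unit.app x)] : IsIso (adj.unit.app x) := by
  have : Epi (adj.unit.app x) := by
    refine @epi_of_epi _ _ _ _ _ (retraction (adj.unit.app x)) _ ?_
    rw [show retraction _ ≫ adj.unit.app x = _ from adj.unit.naturality (retraction _)]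
    have : IsSplitEpi (L.map (retraction (adj.unit.app x))) :=
      IsSplitEpi.mk' ⟨L.map (adj.unit.app x), by simp [← L.map_comp]⟩
    have : Epi (adj.unit.app (R.obj (L.obj x))) := inferInstance
    exact @epi_comp _ _ _ _ _ _ this _ inferInstance
  exact isIso_of_epi_of_isSplitMono _

end CategoryTheory.Adjunction

theorem stmt1 {X A C : Type*} [Category X] [Category A] [Category C]
    (F : X ⥤ A) (U : A ⥤ X) (adjFU : F ⊣ U) [U.Full] [U.Faithful]
    (L : X ⥤ C) (R : C ⥤ X) (adjLR : L ⊣ R) [R.Full] [R.Faithful]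
    (h : IsIso (Functor.whiskerRight adjLR.unit F)) :
    ∃ adj : (R ⋙ F) ⊣ (U ⋙ L), IsIso adj.counit := by
  have hν : ∀ a, IsIso (adjLR.unit.app (U.obj a)) := fun a => by
    have : IsIso (F.map (adjLR.unit.app (U.obj a))) :=
      NatIso.isIso_app_of_isIso (Functor.whiskerRight adjLR.unit F) (U.obj a)
    have := adjFU.isSplitMono_of_isIso_map (adjLR.unit.app (U.obj a))
    exact adjLR.isIso_unit_app_of_isSplitMono _
  let e : (U ⋙ L) ⋙ R ≅ U := (NatIso.ofComponents (fun a => asIso (adjLR.unit.app (U.obj a)))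
    fun f => adjLR.unit.naturality (U.map f)).symm
  have : (U ⋙ L).Full := Functor.Full.of_comp_faithful_iso e
  have : (U ⋙ L).Faithful := Functor.Faithful.of_comp_iso e
  exact ⟨adjFU.restrictFullyFaithful (.ofFullyFaithful R) (.ofFullyFaithful (𝟭 A))
    (Iso.refl _) (Functor.leftUnitor U ≪≫ e.symm), inferInstance⟩
end

section
/- Let F ⊣ U : A → X and L ⊣ R : C → X be adjunctions with U and R fully faithful. The following are equivalent: (i) U factors through R up to isomorphism; (ii) F factors through L up to isomorphism; (iii) the natural transformation ν_U : U → R L U is invertible, where ν is the unit of L ⊣ R; (iv) F ν : F → F R L is invertible. -/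
/-!
Since `R` is fully faithful, `ν` is invertible exactly at the objects of the essential image
of `R`, so (i) ⇔ (iii). A left adjoint of `K ⋙ R` inverts `ν` (as does `L`), which gives
(i) ⇒ (iv) and (ii) ⇒ (iv). Conversely, if `F ν` is invertible then, transposing along
`F ⊣ U`, every `ν_{U a}` has a retraction, and a split mono unit of a reflection is an
isomorphism. The factorisations are `U ⋙ L` and `R ⋙ F`.
-/

open CategoryTheory

namespace CategoryTheory.Adjunction

section Reflection

variable {X C : Type*} [Category X] [Category C] {L : X ⥤ C} {R : C ⥤ X} (adj : L ⊣ R)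

lemma unit_app_obj_eq_map_unit [R.Full] (x : X) :
    adj.unit.app ((L ⋙ R).obj x) = (L ⋙ R).map (adj.unit.app x) := by
  rw [← cancel_mono (R.map (adj.counit.app (L.obj x))), Functor.comp_map, ← R.map_comp]
  simp

lemma isIso_unit_app_of_isSplitMono_s2 [R.Full] {z : X} [IsSplitMono (adj.unit.app z)] :
    IsIso (adj.unit.app z) := by
  refine ⟨retraction (adj.unit.app z), IsSplitMono.id _, ?_⟩
  calc retraction (adj.unit.app z) ≫ adj.unit.app z
      = adj.unit.app ((L ⋙ R).obj z) ≫ (L ⋙ R).map (retraction (adj.unit.app z)) :=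
        adj.unit.naturality _
    _ = (L ⋙ R).map (adj.unit.app z ≫ retraction (adj.unit.app z)) := by
      rw [unit_app_obj_eq_map_unit, Functor.map_comp]
    _ = 𝟙 _ := by rw [IsSplitMono.id, Functor.map_id]

end Reflection

lemma exists_comp_eq_of_isIso_map {X A : Type*} [Category X] [Category A] {F : X ⥤ A}
    {U : A ⥤ X} (adj : F ⊣ U) {x y : X} (f : x ⟶ y) [IsIso (F.map f)] {a : A}
    (g : x ⟶ U.obj a) : ∃ h : y ⟶ U.obj a, f ≫ h = g :=
  ⟨adj.homEquiv _ _ (inv (F.map f) ≫ (adj.homEquiv _ _).symm g), by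
    rw [← homEquiv_naturality_left, IsIso.hom_inv_id_assoc, Equiv.apply_symm_apply]⟩

section Factorisation

variable {X A C : Type*} [Category X] [Category A] [Category C]
  {F : X ⥤ A} {U : A ⥤ X} {L : X ⥤ C} {R : C ⥤ X} (adjLR : L ⊣ R) [R.Full]

lemma isIso_whiskerLeft_unit_of_iso_comp_right [R.Faithful] {K : A ⥤ C} (ψ : K ⋙ R ≅ U) :
    IsIso (Functor.whiskerLeft U adjLR.unit) :=
  (NatTrans.isIso_iff_isIso_app _).2 fun a ↦ adjLR.isIso_unit_app_of_iso (ψ.app a).symm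

lemma isIso_whiskerRight_unit_of_iso_comp_right [R.Faithful] (adjFU : F ⊣ U) {K : A ⥤ C}
    (ψ : K ⋙ R ≅ U) : IsIso (Functor.whiskerRight adjLR.unit F) :=
  (NatTrans.isIso_iff_isIso_app _).2 fun _ ↦
    adjLR.isIso_map_unit_of_isLeftAdjoint_comp (adjFU.ofNatIsoRight ψ.symm)

lemma isIso_whiskerRight_unit_of_iso_comp_left [R.Faithful] {H : C ⥤ A} (φ : L ⋙ H ≅ F) :
    IsIso (Functor.whiskerRight adjLR.unit F) :=
  (NatTrans.isIso_iff_isIso_app _).2 fun _ ↦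
    (NatIso.isIso_map_iff φ _).1 (inferInstanceAs (IsIso (H.map (L.map _))))

lemma isIso_whiskerLeft_unit_of_isIso_whiskerRight (adjFU : F ⊣ U)
    [IsIso (Functor.whiskerRight adjLR.unit F)] : IsIso (Functor.whiskerLeft U adjLR.unit) :=
  (NatTrans.isIso_iff_isIso_app _).2 fun a ↦ by
    have : IsIso (F.map (adjLR.unit.app (U.obj a))) :=
      (NatTrans.isIso_iff_isIso_app _).1 ‹_› (U.obj a)
    obtain ⟨r, hr⟩ := adjFU.exists_comp_eq_of_isIso_map (adjLR.unit.app (U.obj a)) (𝟙 _)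
    have : IsSplitMono (adjLR.unit.app (U.obj a)) := ⟨⟨⟨r, hr⟩⟩⟩
    exact adjLR.isIso_unit_app_of_isSplitMono_s2

end Factorisation

end CategoryTheory.Adjunction

theorem stmt2_general {X A C : Type*} [Category X] [Category A] [Category C]
    (F : X ⥤ A) (U : A ⥤ X) (adjFU : F ⊣ U)
    (L : X ⥤ C) (R : C ⥤ X) (adjLR : L ⊣ R) [R.Full] [R.Faithful] :
    ((∃ K : A ⥤ C, Nonempty (K ⋙ R ≅ U)) ↔ (∃ H : C ⥤ A, Nonempty (L ⋙ H ≅ F))) ∧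
    ((∃ H : C ⥤ A, Nonempty (L ⋙ H ≅ F)) ↔ IsIso (Functor.whiskerLeft U adjLR.unit)) ∧
    (IsIso (Functor.whiskerLeft U adjLR.unit) ↔ IsIso (Functor.whiskerRight adjLR.unit F)) := by
  have tfae : [∃ K : A ⥤ C, Nonempty (K ⋙ R ≅ U), ∃ H : C ⥤ A, Nonempty (L ⋙ H ≅ F),
      IsIso (Functor.whiskerLeft U adjLR.unit),
      IsIso (Functor.whiskerRight adjLR.unit F)].TFAE := by
    tfae_have 1 → 3 := fun ⟨_, ⟨ψ⟩⟩ ↦ adjLR.isIso_whiskerLeft_unit_of_iso_comp_right ψ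
    tfae_have 3 → 1 := fun _ ↦ ⟨U ⋙ L, ⟨Functor.associator U L R ≪≫
      (asIso (Functor.whiskerLeft U adjLR.unit)).symm ≪≫ U.rightUnitor⟩⟩
    tfae_have 1 → 4 := fun ⟨_, ⟨ψ⟩⟩ ↦ adjLR.isIso_whiskerRight_unit_of_iso_comp_right adjFU ψ
    tfae_have 4 → 3 := fun _ ↦ adjLR.isIso_whiskerLeft_unit_of_isIso_whiskerRight adjFU
    tfae_have 4 → 2 := fun _ ↦ ⟨R ⋙ F, ⟨(Functor.associator L R F).symm ≪≫
      (asIso (Functor.whiskerRight adjLR.unit F)).symm ≪≫ F.leftUnitor⟩⟩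
    tfae_have 2 → 4 := fun ⟨_, ⟨φ⟩⟩ ↦ adjLR.isIso_whiskerRight_unit_of_iso_comp_left φ
    tfae_finish
  exact ⟨tfae.out 0 1, tfae.out 1 2, tfae.out 2 3⟩

theorem stmt2 {X A C : Type*} [Category X] [Category A] [Category C]
    (F : X ⥤ A) (U : A ⥤ X) (adjFU : F ⊣ U) [U.Full] [U.Faithful]
    (L : X ⥤ C) (R : C ⥤ X) (adjLR : L ⊣ R) [R.Full] [R.Faithful] :
    ((∃ K : A ⥤ C, Nonempty (K ⋙ R ≅ U)) ↔ (∃ H : C ⥤ A, Nonempty (L ⋙ H ≅ F))) ∧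
    ((∃ H : C ⥤ A, Nonempty (L ⋙ H ≅ F)) ↔ IsIso (Functor.whiskerLeft U adjLR.unit)) ∧
    (IsIso (Functor.whiskerLeft U adjLR.unit) ↔ IsIso (Functor.whiskerRight adjLR.unit F)) :=
  stmt2_general F U adjFU L R adjLR
end

section
/- Every finitely generated commutative ℂ-algebra that is a local ring is Artinian. -/
/-!
A finitely generated algebra over a field is Noetherian and Jacobson. In a Jacobson local ring
the nilradical equals the Jacobson radical, which is the maximal ideal; hence every prime ideal,
containing the nilradical, is maximal, so the ring has dimension zero. A Noetherian ring of
dimension zero is Artinian.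
-/

theorem IsLocalRing.nilradical_eq_maximalIdeal_of_isJacobsonRing (R : Type*) [CommRing R]
    [IsJacobsonRing R] [IsLocalRing R] : nilradical R = IsLocalRing.maximalIdeal R := by
  rw [nilradical, Ideal.radical_eq_jacobson]
  exact IsLocalRing.jacobson_eq_maximalIdeal ⊥ bot_ne_top

theorem IsLocalRing.isArtinianRing_of_isJacobsonRing (R : Type*) [CommRing R]
    [IsNoetherianRing R] [IsJacobsonRing R] [IsLocalRing R] : IsArtinianRing R :=
  have : (nilradical R).IsMaximal := by
    rw [IsLocalRing.nilradical_eq_maximalIdeal_of_isJacobsonRing]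
    infer_instance
  have : Ring.KrullDimLE 0 R := Ring.KrullDimLE.of_isMaximal_nilradical R
  IsNoetherianRing.isArtinianRing_of_krullDimLE_zero

theorem stmt8 (A : Type*) [CommRing A] [Algebra ℂ A] [Algebra.FiniteType ℂ A]
    [IsLocalRing A] : IsArtinianRing A :=
  have : IsNoetherianRing A := Algebra.FiniteType.isNoetherianRing ℂ A
  have : IsJacobsonRing A := isJacobsonRing_of_finiteType (A := ℂ)
  IsLocalRing.isArtinianRing_of_isJacobsonRing A
end

section
/- A finitely generated commutative ℂ-algebra R is reduced if and only if the family of all ℂ-algebra homomorphisms R → ℂ is jointly injective (i.e., for x ≠ y in R there is a ℂ-algebra map φ : R → ℂ with φ(x) ≠ φ(y)). -/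
/-!
A finitely generated algebra over an algebraically closed field `k` is a Jacobson ring, so if it
is reduced its Jacobson radical vanishes and `x - y ≠ 0` avoids some maximal ideal `m`; by
Zariski's lemma `R ⧸ m = k`, giving a point separating `x` and `y`. Conversely the points embed
`R` into a product of copies of `k`, which is reduced.
-/

theorem isReduced_of_algHom_separating {k R S : Type*} [CommSemiring k] [CommSemiring R]
    [Semiring S] [Algebra k R] [Algebra k S] [IsReduced S]
    (h : ∀ x y : R, x ≠ y → ∃ φ : R →ₐ[k] S, φ x ≠ φ y) : IsReduced R := by
  refine isReduced_of_injective (AlgHom.pi (fun φ : R →ₐ[k] S ↦ φ)) fun x y hxy ↦ ?_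
  by_contra hne
  obtain ⟨φ, hφ⟩ := h x y hne
  exact hφ (congrFun hxy φ)

theorem Ideal.exists_isMaximal_notMem_of_ne_zero {R : Type*} [CommRing R] [IsJacobsonRing R]
    [IsReduced R] {x : R} (hx : x ≠ 0) : ∃ m : Ideal R, m.IsMaximal ∧ x ∉ m := by
  have hjac : (⊥ : Ideal R).jacobson = ⊥ := by
    rw [← Ideal.radical_eq_jacobson, ← Ideal.zero_eq_bot, ← nilradical, nilradical_eq_zero]
  have : x ∉ (⊥ : Ideal R).jacobson := by simpa [hjac] using hx
  simpa [Ideal.jacobson, Ideal.mem_sInf] using this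

section AlgClosed

variable {k R : Type*} [Field k] [IsAlgClosed k] [CommRing R] [Algebra k R]
  [Algebra.FiniteType k R]

/-- By Zariski's lemma `R ⧸ m` is a finite extension of `k`, hence `k` itself. -/
theorem Ideal.exists_algHom_ker_eq_of_isMaximal (m : Ideal R) [m.IsMaximal] :
    ∃ φ : R →ₐ[k] k, RingHom.ker φ = m := by
  let := Ideal.Quotient.field m
  have : Algebra.FiniteType k (R ⧸ m) :=
    .of_surjective (Ideal.Quotient.mkₐ k m) Ideal.Quotient.mk_surjective
  have := finite_of_finite_type_of_isJacobsonRing k (R ⧸ m)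
  refine ⟨(IsAlgClosed.lift : (R ⧸ m) →ₐ[k] k).comp (Ideal.Quotient.mkₐ k m), ?_⟩
  ext x
  simp [RingHom.mem_ker, Ideal.Quotient.eq_zero_iff_mem]

theorem exists_algHom_ne_of_ne [IsReduced R] {x y : R} (hxy : x ≠ y) :
    ∃ φ : R →ₐ[k] k, φ x ≠ φ y := by
  have : IsJacobsonRing R := isJacobsonRing_of_finiteType (A := k)
  obtain ⟨m, hm, hxym⟩ := Ideal.exists_isMaximal_notMem_of_ne_zero (sub_ne_zero.mpr hxy)
  obtain ⟨φ, hφ⟩ := m.exists_algHom_ker_eq_of_isMaximal (k := k)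
  refine ⟨φ, fun h ↦ hxym ?_⟩
  rw [← hφ, RingHom.mem_ker]
  simp [h]

end AlgClosed

theorem stmt11 (R : Type*) [CommRing R] [Algebra ℂ R] [Algebra.FiniteType ℂ R] :
    IsReduced R ↔ ∀ x y : R, x ≠ y → ∃ φ : R →ₐ[ℂ] ℂ, φ x ≠ φ y :=
  ⟨fun _ _ _ ↦ exists_algHom_ne_of_ne, isReduced_of_algHom_separating⟩
end

section
/- Let ℂ-Alg_fg be the category of finitely generated commutative ℂ-algebras and f : A → B a ℂ-algebra homomorphism such that all ℂ-algebra maps B → ℂ composed with f agree (i.e., f is a pseudo-constant in the opposite category, where points correspond to algebra maps to ℂ). If B admits at least one ℂ-algebra map to ℂ, then f factors through a finitely generated ℂ-algebra that admits exactly one ℂ-algebra map to ℂ. -/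
/-!
By the Nullstellensatz, an element of a finitely generated `ℂ`-algebra on which every point
vanishes is nilpotent. Hence for a pseudo-constant `f` and a point `φ₀` of `B`, each `f a` differs
from the scalar `φ₀ (f a)` by a nilpotent, and this stays true in the image of `f`. Since `ℂ` is
reduced, every point of the image sends `f a` to `φ₀ (f a)`, so the image has exactly one point,
and `f` factors through it.
-/

section Nullstellensatz

variable {K B : Type*} [Field K] [IsAlgClosed K] [CommRing B] [Algebra K B]
  [Algebra.FiniteType K B]

theorem exists_algHom_ker_le_of_isMaximal (m : Ideal B) [m.IsMaximal] :
    ∃ ψ : B →ₐ[K] K, RingHom.ker ψ ≤ m := by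
  let : Field (B ⧸ m) := Ideal.Quotient.field m
  have : Algebra.FiniteType K (B ⧸ m) :=
    .of_surjective (Ideal.Quotient.mkₐ K m) (Ideal.Quotient.mkₐ_surjective K m)
  have : Module.Finite K (B ⧸ m) := finite_of_finite_type_of_isJacobsonRing K (B ⧸ m)
  refine ⟨(IsAlgClosed.lift : B ⧸ m →ₐ[K] K).comp (Ideal.Quotient.mkₐ K m), fun x hx => ?_⟩
  rw [RingHom.mem_ker, AlgHom.comp_apply,
    map_eq_zero_iff (IsAlgClosed.lift : B ⧸ m →ₐ[K] K)
      (IsAlgClosed.lift : B ⧸ m →ₐ[K] K).toRingHom.injective] at hx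
  exact Ideal.Quotient.eq_zero_iff_mem.mp hx

theorem isNilpotent_of_forall_algHom_eq_zero {b : B} (h : ∀ ψ : B →ₐ[K] K, ψ b = 0) :
    IsNilpotent b := by
  have : IsJacobsonRing B := isJacobsonRing_of_finiteType (A := K)
  rw [← mem_nilradical, nilradical, Ideal.radical_eq_jacobson, Ideal.jacobson, Ideal.mem_sInf]
  rintro m ⟨-, hm⟩
  obtain ⟨ψ, hψ⟩ := exists_algHom_ker_le_of_isMaximal (K := K) m
  exact hψ (h ψ)

end Nullstellensatz

theorem AlgHom.apply_eq_of_isNilpotent_sub_algebraMap {R S T : Type*} [CommSemiring R]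
    [Ring S] [Ring T] [IsReduced T] [Algebra R S] [Algebra R T] (φ : S →ₐ[R] T) {x : S} {c : R}
    (hx : IsNilpotent (x - algebraMap R S c)) : φ x = algebraMap R T c := by
  rw [← sub_eq_zero, ← φ.commutes c, ← map_sub]
  exact (hx.map φ).eq_zero

theorem stmt18 (A B : Type) [CommRing A] [CommRing B] [Algebra ℂ A] [Algebra ℂ B]
    [Algebra.FiniteType ℂ A] [Algebra.FiniteType ℂ B]
    (f : A →ₐ[ℂ] B)
    (hpc : ∀ φ ψ : B →ₐ[ℂ] ℂ, φ.comp f = ψ.comp f)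
    (hpt : Nonempty (B →ₐ[ℂ] ℂ)) :
    ∃ (W : Type) (_i : CommRing W) (_j : Algebra ℂ W),
      Algebra.FiniteType ℂ W ∧ (∃! φ : W →ₐ[ℂ] ℂ, True) ∧
      ∃ (g : A →ₐ[ℂ] W) (h : W →ₐ[ℂ] B), h.comp g = f := by
  obtain ⟨φ₀⟩ := hpt
  have hnil : ∀ a, IsNilpotent (f.rangeRestrict a - algebraMap ℂ f.range (φ₀ (f a))) := by
    intro a
    rw [← IsNilpotent.map_iff (f := f.range.val) Subtype.val_injective]
    refine isNilpotent_of_forall_algHom_eq_zero (K := ℂ) fun ψ => ?_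
    have hψ : ψ (f a) = φ₀ (f a) := DFunLike.congr_fun (hpc ψ φ₀) a
    simp [hψ]
  refine ⟨f.range, inferInstance, inferInstance,
    .of_surjective _ f.rangeRestrict_surjective,
    ⟨φ₀.comp f.range.val, trivial, fun χ _ => ?_⟩, f.rangeRestrict, f.range.val, rfl⟩
  ext w
  obtain ⟨a, rfl⟩ := f.rangeRestrict_surjective w
  rw [χ.apply_eq_of_isNilpotent_sub_algebraMap (hnil a),
    (φ₀.comp f.range.val).apply_eq_of_isNilpotent_sub_algebraMap (hnil a)]
end
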